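/- Let N ≥ 2 be an integer and for s ∈ [0, 1] let A(s) be the real 2×2 matrix A(s) = [[(1−s)(N−1)/N, (s−1)(N−1)/N^{3/2}], [(s−1)/√N, (1−s+sN)/N]]. Then for every s ∈ [0, 1] the two eigenvalues of A(s) are distinct; i.e. no eigenvalue crossing occurs along the entire adiabatic evolution of the restricted quantum search Hamiltonian. -/

import Mathlib

/-!
The two eigenvalues of a real `2 × 2` matrix are the roots of its characteristic polynomial
`X² - tr X + det`, so they are real and distinct exactly when the discriminant `tr² - 4 det` is
positive. For the Grover matrix this discriminant is the squared spectral gap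
`1 - 4 (1 - 1/N) s (1 - s) = (1 + (N - 1)(1 - 2s)²) / N`, which is at least `1/N`.
-/

open Polynomial

namespace Matrix

theorem exists_ne_spectrum_eq_pair_of_discr_pos (M : Matrix (Fin 2) (Fin 2) ℝ)
    (hM : 0 < M.discr) : ∃ a b : ℝ, a ≠ b ∧ spectrum ℝ M = {a, b} := by
  set d := Real.sqrt M.discr
  have hd : 0 < d := Real.sqrt_pos.mpr hM
  have hdiscrim : discrim 1 (-M.trace) M.det = d * d := by
    rw [Real.mul_self_sqrt hM.le, discr_fin_two, discrim]
    ring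
  refine ⟨(M.trace + d) / 2, (M.trace - d) / 2, by intro h; linarith, ?_⟩
  ext x
  have hroots := quadratic_eq_zero_iff one_ne_zero hdiscrim x
  simp only [neg_neg, mul_one, one_mul] at hroots
  rw [mem_spectrum_iff_isRoot_charpoly, charpoly_fin_two, Set.mem_insert_iff,
    Set.mem_singleton_iff, ← hroots]
  simp only [IsRoot.def, eval_add, eval_sub, eval_pow, eval_mul, eval_X, eval_C]
  constructor <;> intro h <;> linarith

end Matrix

noncomputable def groverMatrix (N : ℕ) (s : ℝ) : Matrix (Fin 2) (Fin 2) ℝ :=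
  !![(1 - s) * (N - 1) / N, (s - 1) * (N - 1) / (N * Real.sqrt N);
     (s - 1) / Real.sqrt N, (1 - s + s * N) / N]

theorem groverMatrix_discr {N : ℕ} (hN : 0 < N) (s : ℝ) :
    (groverMatrix N s).discr = (1 + (N - 1) * (1 - 2 * s) ^ 2) / N := by
  have hN' : (0 : ℝ) < N := by exact_mod_cast hN
  have hsqrt : Real.sqrt N ^ 2 = N := Real.sq_sqrt hN'.le
  have : Real.sqrt N ≠ 0 := (Real.sqrt_pos.mpr hN').ne'
  rw [Matrix.discr_fin_two, groverMatrix, Matrix.trace_fin_two_of, Matrix.det_fin_two_of]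
  field_simp
  rw [hsqrt]
  ring

theorem groverMatrix_discr_pos {N : ℕ} (hN : 0 < N) (s : ℝ) : 0 < (groverMatrix N s).discr := by
  have hN' : (1 : ℝ) ≤ N := by exact_mod_cast hN
  rw [groverMatrix_discr hN]
  have : 0 ≤ (N - 1 : ℝ) * (1 - 2 * s) ^ 2 := mul_nonneg (by linarith) (sq_nonneg _)
  positivity

/-- no eigenvalue crossing occurs for the restricted Grover Hamiltonian:
for every `s ∈ [0,1]`, the matrix `A(s)` has two distinct eigenvalues. -/
theorem stmt_18 (N : ℕ) (hN : 2 ≤ N)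
    (A : ℝ → Matrix (Fin 2) (Fin 2) ℝ)
    (hA : ∀ s : ℝ, A s =
      !![(1 - s) * (N - 1) / N, (s - 1) * (N - 1) / (N * Real.sqrt N);
         (s - 1) / Real.sqrt N, (1 - s + s * N) / N]) :
    ∀ s ∈ Set.Icc (0 : ℝ) 1,
      ∃ a b : ℝ, a ≠ b ∧ spectrum ℝ (A s) = {a, b} := by
  intro s _
  rw [hA s]
  exact Matrix.exists_ne_spectrum_eq_pair_of_discr_pos _ (groverMatrix_discr_pos (by lia) s)
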